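/- Let G ≥ 2 and s_max ≥ 1 be integers, let a_1, …, a_G be real numbers, and let c_1, …, c_G be natural numbers. An assignment chooses, for each g, a multiset S_g consisting of exactly c_g integers from {1, …, s_max} (each value available in unlimited supply) and sets L_g = a_g + ∑_{s ∈ S_g} s; write D(S) = max_g L_g − min_g L_g and N(S) for the number of indices g with L_g = max_h L_h. Suppose S* is an assignment minimizing, in lexicographic order, the pair (D(S), N(S)) over all assignments, and suppose D(S*) > s_max. Then for every index g₁ with L_{g₁}(S*) = max_h L_h(S*), every index g₂ with L_{g₂}(S*) = min_h L_h(S*), every x ∈ S*_{g₁} and every y ∈ S*_{g₂}, one has x ≤ y. -/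
import Mathlib


open Finset

/-- Maximum of a finite family of reals. -/
noncomputable def finMax {G : ℕ} [NeZero G] (v : Fin G → ℝ) : ℝ :=
  Finset.univ.sup' ⟨0, Finset.mem_univ 0⟩ v

/-- Minimum of a finite family of reals. -/
noncomputable def finMin {G : ℕ} [NeZero G] (v : Fin G → ℝ) : ℝ :=
  Finset.univ.inf' ⟨0, Finset.mem_univ 0⟩ v

/-- Post-admission load of worker `g`: pre-admission load plus total size assigned. -/
noncomputable def loadOf {G : ℕ} (a : Fin G → ℝ) (S : Fin G → Multiset ℤ) (g : Fin G) : ℝ :=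
  a g + ((S g).sum : ℝ)

/-- The gap of an assignment: max load minus min load. -/
noncomputable def gapOf {G : ℕ} [NeZero G] (a : Fin G → ℝ) (S : Fin G → Multiset ℤ) : ℝ :=
  finMax (loadOf a S) - finMin (loadOf a S)

open scoped Classical in
/-- The number of workers attaining the maximum load. -/
noncomputable def numMaxOf {G : ℕ} [NeZero G] (a : Fin G → ℝ) (S : Fin G → Multiset ℤ) : ℕ :=
  (Finset.univ.filter fun g => loadOf a S g = finMax (loadOf a S)).card

/-- In a lexicographically optimal assignment whose gap exceeds `s_max`, every job
size on a maximally loaded worker is at most every job size on a minimally loaded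
worker. -/
theorem lexmin_assignment_separation (G : ℕ) [NeZero G] (hG : 2 ≤ G)
    (smax : ℕ) (hsmax : 1 ≤ smax)
    (a : Fin G → ℝ) (c : Fin G → ℕ)
    (S : Fin G → Multiset ℤ)
    (hScard : ∀ g, (S g).card = c g)
    (hSrange : ∀ g, ∀ x ∈ S g, 1 ≤ x ∧ x ≤ (smax : ℤ))
    (hlex : ∀ T : Fin G → Multiset ℤ,
      (∀ g, (T g).card = c g) → (∀ g, ∀ x ∈ T g, 1 ≤ x ∧ x ≤ (smax : ℤ)) →
      gapOf a S < gapOf a T ∨ (gapOf a S = gapOf a T ∧ numMaxOf a S ≤ numMaxOf a T))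
    (hD : (smax : ℝ) < gapOf a S)
    (g₁ g₂ : Fin G)
    (h₁ : loadOf a S g₁ = finMax (loadOf a S))
    (h₂ : loadOf a S g₂ = finMin (loadOf a S))
    (x y : ℤ) (hx : x ∈ S g₁) (hy : y ∈ S g₂) :
    x ≤ y := by
  by_contra hxy
  push_neg at hxy
  set M := finMax (loadOf a S) with hM
  set m := finMin (loadOf a S) with hm
  obtain ⟨hx1, hx2⟩ := hSrange g₁ x hx
  obtain ⟨hy1, hy2⟩ := hSrange g₂ y hy
  have hgap : gapOf a S = M - m := rfl
  have hMm : m < M := by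
    have : (1:ℝ) ≤ (smax:ℝ) := by exact_mod_cast hsmax
    linarith [hD]
  have hne : g₁ ≠ g₂ := by
    intro h
    rw [h, h₂] at h₁
    exact absurd h₁ (ne_of_lt hMm)
  set T : Fin G → Multiset ℤ :=
    Function.update (Function.update S g₂ ((S g₂).erase y + {x})) g₁ ((S g₁).erase x + {y}) with hTdef
  have hT1 : T g₁ = (S g₁).erase x + {y} := Function.update_self _ _ _
  have hT2 : T g₂ = (S g₂).erase y + {x} := by
    rw [hTdef, Function.update_of_ne (Ne.symm hne), Function.update_self]
  have hTo : ∀ g, g ≠ g₁ → g ≠ g₂ → T g = S g := by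
    intro g hg1 hg2
    rw [hTdef, Function.update_of_ne hg1, Function.update_of_ne hg2]
  have hTcard : ∀ g, (T g).card = c g := by
    intro g
    by_cases hg1 : g = g₁
    · rw [hg1, hT1]
      simp only [Multiset.card_add, Multiset.card_erase_of_mem hx, Multiset.card_singleton]
      rw [← hScard g₁]
      exact Nat.succ_pred_eq_of_pos (Multiset.card_pos.mpr (fun h => by simp [h] at hx))
    · by_cases hg2 : g = g₂
      · rw [hg2, hT2]
        simp only [Multiset.card_add, Multiset.card_erase_of_mem hy, Multiset.card_singleton]
        rw [← hScard g₂]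
        exact Nat.succ_pred_eq_of_pos (Multiset.card_pos.mpr (fun h => by simp [h] at hy))
      · rw [hTo g hg1 hg2]; exact hScard g
  have hTrange : ∀ g, ∀ z ∈ T g, 1 ≤ z ∧ z ≤ (smax : ℤ) := by
    intro g z hz
    by_cases hg1 : g = g₁
    · rw [hg1, hT1] at hz
      rcases Multiset.mem_add.mp hz with h | h
      · exact hSrange g₁ z (Multiset.mem_of_mem_erase h)
      · rw [Multiset.mem_singleton.mp h]; exact ⟨hy1, hy2⟩
    · by_cases hg2 : g = g₂
      · rw [hg2, hT2] at hz
        rcases Multiset.mem_add.mp hz with h | h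
        · exact hSrange g₂ z (Multiset.mem_of_mem_erase h)
        · rw [Multiset.mem_singleton.mp h]; exact ⟨hx1, hx2⟩
      · exact hSrange g z (hTo g hg1 hg2 ▸ hz)
  -- loads
  have hsum1 : ((S g₁).erase x).sum = (S g₁).sum - x := by
    have := Multiset.sum_erase hx; linarith
  have hsum2 : ((S g₂).erase y).sum = (S g₂).sum - y := by
    have := Multiset.sum_erase hy; linarith
  have hL1 : loadOf a T g₁ = loadOf a S g₁ - (x:ℝ) + (y:ℝ) := by
    unfold loadOf
    rw [hT1, Multiset.sum_add, hsum1, Multiset.sum_singleton]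
    push_cast
    ring
  have hL2 : loadOf a T g₂ = loadOf a S g₂ + (x:ℝ) - (y:ℝ) := by
    unfold loadOf
    rw [hT2, Multiset.sum_add, hsum2, Multiset.sum_singleton]
    push_cast
    ring
  have hLo : ∀ g, g ≠ g₁ → g ≠ g₂ → loadOf a T g = loadOf a S g := by
    intro g hg1 hg2; unfold loadOf; rw [hTo g hg1 hg2]
  have hdpos : (0:ℝ) < (x:ℝ) - (y:ℝ) := by
    have : (y:ℝ) < (x:ℝ) := by exact_mod_cast hxy
    linarith
  have hdlt : (x:ℝ) - (y:ℝ) < M - m := by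
    have hxr : (x:ℝ) ≤ (smax:ℝ) := by exact_mod_cast hx2
    have hyr : (1:ℝ) ≤ (y:ℝ) := by exact_mod_cast hy1
    linarith [hD]
  have hle : ∀ g, loadOf a S g ≤ M := fun g => Finset.le_sup' _ (Finset.mem_univ g)
  have hge : ∀ g, m ≤ loadOf a S g := fun g => Finset.inf'_le _ (Finset.mem_univ g)
  have hT1lt : loadOf a T g₁ < M := by rw [hL1, h₁]; linarith
  have hT2lt : loadOf a T g₂ < M := by rw [hL2, h₂]; linarith
  have hT1gt : m < loadOf a T g₁ := by rw [hL1, h₁]; linarith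
  have hT2gt : m < loadOf a T g₂ := by rw [hL2, h₂]; linarith
  have hTub : ∀ g, loadOf a T g ≤ M := by
    intro g
    by_cases hg1 : g = g₁
    · exact hg1 ▸ le_of_lt hT1lt
    · by_cases hg2 : g = g₂
      · exact hg2 ▸ le_of_lt hT2lt
      · rw [hLo g hg1 hg2]; exact hle g
  have hTlb : ∀ g, m ≤ loadOf a T g := by
    intro g
    by_cases hg1 : g = g₁
    · exact hg1 ▸ le_of_lt hT1gt
    · by_cases hg2 : g = g₂
      · exact hg2 ▸ le_of_lt hT2gt
      · rw [hLo g hg1 hg2]; exact hge g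
  have hmaxT : finMax (loadOf a T) ≤ M :=
    Finset.sup'_le _ _ fun g _ => hTub g
  have hminT : m ≤ finMin (loadOf a T) :=
    Finset.le_inf' _ _ fun g _ => hTlb g
  have hgapT : gapOf a T ≤ gapOf a S := by
    unfold gapOf; rw [← hM, ← hm]; linarith
  rcases hlex T hTcard hTrange with h | ⟨heq, hnum⟩
  · linarith
  · have hMT : finMax (loadOf a T) = M := by
      have hg' : gapOf a T = M - m := heq ▸ hgap
      have : finMax (loadOf a T) - finMin (loadOf a T) = M - m := hg'
      linarith
    -- count of max attainers strictly decreases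
    classical
    have hsubset : (Finset.univ.filter fun g => loadOf a T g = finMax (loadOf a T)) ⊆
        (Finset.univ.filter fun g => loadOf a S g = M).erase g₁ := by
      intro g hg
      rw [Finset.mem_filter, hMT] at hg
      have hgne1 : g ≠ g₁ := by
        intro h; rw [h] at hg; exact absurd hg.2 (ne_of_lt hT1lt)
      have hgne2 : g ≠ g₂ := by
        intro h; rw [h] at hg; exact absurd hg.2 (ne_of_lt hT2lt)
      rw [Finset.mem_erase]
      exact ⟨hgne1, Finset.mem_filter.mpr ⟨Finset.mem_univ g, (hLo g hgne1 hgne2) ▸ hg.2⟩⟩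
    have hg1mem : g₁ ∈ Finset.univ.filter fun g => loadOf a S g = M :=
      Finset.mem_filter.mpr ⟨Finset.mem_univ g₁, h₁⟩
    have hlt : numMaxOf a T < numMaxOf a S := by
      unfold numMaxOf
      calc (Finset.univ.filter fun g => loadOf a T g = finMax (loadOf a T)).card
          ≤ ((Finset.univ.filter fun g => loadOf a S g = M).erase g₁).card :=
            Finset.card_le_card hsubset
        _ < (Finset.univ.filter fun g => loadOf a S g = M).card :=
            Finset.card_erase_lt_of_mem hg1mem
    omega
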